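/- Let G be an abelian group, M ⊆ G a sharp and saturated submonoid, R a commutative ring, α : M → R a multiplicative map, and ℓ₁, ℓ₂ ∈ M elements with α(ℓ₁) = 0, α(ℓ₂) = 0 and ℓ₁ + ℓ₂ ≠ 0. Define S to be the set of quadruples (a₁, s₁, a₂, s₂) ∈ M × ℤ × M × ℤ such that (i) a₁ + s₁·ℓ₁ = a₂ + s₂·ℓ₂ in G, (ii) s₁ + s₂ = 0, and (iii) for each k ∈ {1,2}, either s_k ≥ 0, or (a_k + s_k·ℓ_k ∈ M and α(a_k + s_k·ℓ_k) = 0). Define T = {(a₁, a₂) ∈ M × M : ∃ s ∈ ℤ, a₂ − a₁ = s·(ℓ₁ + ℓ₂) in G}. Then: (1) the projection (a₁, s₁, a₂, s₂) ↦ (a₁, a₂) is a bijection from S onto T; and (2) T is a submonoid of M × M. -/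

import Mathlib

/-!
Conditions (i) and (ii) say exactly that `a₂ - a₁ = s₁ • (ℓ₁ + ℓ₂)` with `s₂ = -s₁`, so the
projection lands in `T`. The multiplier `s₁` is determined by `(a₁, a₂)` because in a sharp
saturated monoid a nonzero element has infinite order: `n • x = 0` with `n ≥ 1` gives
`n • (-x) ∈ M`, hence `-x ∈ M` and `x = 0`. Condition (iii) is automatic: when `s₁ < 0`, the
element `a₁ + s₁ • ℓ₁ = a₂ + (-s₁) • ℓ₂` lies in `M` and `α` kills it, since `α ℓ₂ = 0` and
`-s₁ ≥ 1`; symmetrically when `s₂ < 0`. Finally `T` is the preimage of the subgroup `ℤ (ℓ₁ + ℓ₂)`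
under the additive map `(a₁, a₂) ↦ a₂ - a₁`.
-/

theorem apply_add_nsmul_eq_zero {M R : Type*} [AddMonoid M] [MulZeroClass R] {α : M → R}
    (hαadd : ∀ a b : M, α (a + b) = α a * α b) {ℓ : M} (hℓ : α ℓ = 0) (b : M) {n : ℕ}
    (hn : n ≠ 0) : α (b + n • ℓ) = 0 := by
  obtain ⟨m, rfl⟩ := Nat.exists_eq_succ_of_ne_zero hn
  rw [succ_nsmul, ← add_assoc, hαadd, hℓ, mul_zero]

theorem add_zsmul_eq_add_neg_zsmul_iff {G : Type*} [AddCommGroup G] (u v x₁ x₂ : G) (s : ℤ) :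
    u + s • x₁ = v + (-s) • x₂ ↔ v - u = s • (x₁ + x₂) := by
  constructor <;> intro h
  · linear_combination (norm := module) -h
  · linear_combination (norm := module) -h

namespace AddSubmonoid

variable {G : Type*} [AddCommGroup G] (M : AddSubmonoid G)

theorem zsmul_left_injective_of_sharp_of_saturated (hsharp : ∀ a ∈ M, -a ∈ M → a = 0)
    (hsat : ∀ g : G, ∀ n : ℤ, 1 ≤ n → n • g ∈ M → g ∈ M) {x : G} (hx : x ∈ M) (hx0 : x ≠ 0) :
    Function.Injective fun s : ℤ => s • x := by
  intro s t hst
  by_contra hne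
  have h_abs : |s - t| • x = 0 :=
    (abs_zsmul_eq_zero _ _).2 (by rw [sub_smul]; exact sub_eq_zero.2 hst)
  have h_neg : -x ∈ M := by
    refine hsat (-x) |s - t| (Int.one_le_abs (sub_ne_zero.2 hne)) ?_
    rw [smul_neg, h_abs, neg_zero]
    exact M.zero_mem
  exact hx0 (hsharp x hx h_neg)

theorem exists_mem_apply_eq_zero_of_eq_add_zsmul {R : Type*} [MulZeroClass R] {α : M → R}
    (hαadd : ∀ a b : M, α (a + b) = α a * α b) {ℓ : M} (hℓ : α ℓ = 0) (b : M) {t : ℤ}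
    (ht : 0 < t) {g : G} (hg : g = b + t • (ℓ : G)) : ∃ h : g ∈ M, α ⟨g, h⟩ = 0 := by
  lift t to ℕ using ht.le
  have hg' : g = ((b + t • ℓ : M) : G) := by simp [hg]
  subst hg'
  exact ⟨(b + t • ℓ).2, apply_add_nsmul_eq_zero hαadd hℓ b (by omega)⟩

def divisibilitySubmonoid (x : G) : AddSubmonoid (M × M) :=
  (AddSubgroup.zmultiples x).toAddSubmonoid.comap
    (M.subtype.comp (AddMonoidHom.snd M M) - M.subtype.comp (AddMonoidHom.fst M M))

theorem coe_divisibilitySubmonoid (x : G) :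
    (M.divisibilitySubmonoid x : Set (M × M)) =
      {p : M × M | ∃ s : ℤ, (p.2 : G) - (p.1 : G) = s • x} := by
  ext p
  simp [divisibilitySubmonoid, AddSubgroup.mem_zmultiples_iff, eq_comm]

variable {R : Type*} [MulZeroClass R] (α : M → R) (ℓ₁ ℓ₂ : M)

def gluingQuadruples : Set (M × ℤ × M × ℤ) :=
  {q : M × ℤ × M × ℤ |
    (q.1 : G) + q.2.1 • (ℓ₁ : G) = (q.2.2.1 : G) + q.2.2.2 • (ℓ₂ : G) ∧
    q.2.1 + q.2.2.2 = 0 ∧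
    (0 ≤ q.2.1 ∨
      ∃ h : (q.1 : G) + q.2.1 • (ℓ₁ : G) ∈ M, α ⟨(q.1 : G) + q.2.1 • (ℓ₁ : G), h⟩ = 0) ∧
    (0 ≤ q.2.2.2 ∨
      ∃ h : (q.2.2.1 : G) + q.2.2.2 • (ℓ₂ : G) ∈ M,
        α ⟨(q.2.2.1 : G) + q.2.2.2 • (ℓ₂ : G), h⟩ = 0)}

variable {M α ℓ₁ ℓ₂}

theorem sub_eq_zsmul_of_mem_gluingQuadruples {a₁ a₂ : M} {s₁ s₂ : ℤ}
    (hq : (a₁, s₁, a₂, s₂) ∈ M.gluingQuadruples α ℓ₁ ℓ₂) :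
    (a₂ : G) - a₁ = s₁ • ((ℓ₁ : G) + ℓ₂) ∧ s₂ = -s₁ := by
  obtain ⟨h_eq, h_sum, -, -⟩ := hq
  obtain rfl : s₂ = -s₁ := eq_neg_of_add_eq_zero_right h_sum
  exact ⟨(add_zsmul_eq_add_neg_zsmul_iff _ _ _ _ _).1 h_eq, rfl⟩

theorem bijOn_gluingQuadruples (hsharp : ∀ a ∈ M, -a ∈ M → a = 0)
    (hsat : ∀ g : G, ∀ n : ℤ, 1 ≤ n → n • g ∈ M → g ∈ M)
    (hαadd : ∀ a b : M, α (a + b) = α a * α b) (hℓ₁ : α ℓ₁ = 0) (hℓ₂ : α ℓ₂ = 0)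
    (hne : (ℓ₁ : G) + (ℓ₂ : G) ≠ 0) :
    Set.BijOn (fun q : M × ℤ × M × ℤ => (q.1, q.2.2.1)) (M.gluingQuadruples α ℓ₁ ℓ₂)
      (M.divisibilitySubmonoid ((ℓ₁ : G) + ℓ₂)) := by
  rw [coe_divisibilitySubmonoid]
  refine ⟨fun ⟨_, s₁, _, _⟩ hq => ⟨s₁, (sub_eq_zsmul_of_mem_gluingQuadruples hq).1⟩, ?_, ?_⟩
  · rintro ⟨a₁, s₁, a₂, s₂⟩ hq ⟨a₁', s₁', a₂', s₂'⟩ hq' hqq'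
    obtain ⟨rfl, rfl⟩ := Prod.mk.inj hqq'
    dsimp only at hq'
    obtain ⟨h_sub, rfl⟩ := sub_eq_zsmul_of_mem_gluingQuadruples hq
    obtain ⟨h_sub', rfl⟩ := sub_eq_zsmul_of_mem_gluingQuadruples hq'
    have hs : s₁ = s₁' := zsmul_left_injective_of_sharp_of_saturated M hsharp hsat
      (add_mem ℓ₁.2 ℓ₂.2) hne (h_sub.symm.trans h_sub')
    rw [hs]
  · rintro ⟨a₁, a₂⟩ ⟨s, hs⟩
    have h_eq := (add_zsmul_eq_add_neg_zsmul_iff _ _ _ _ s).2 hs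
    refine ⟨(a₁, s, a₂, -s), ⟨h_eq, add_neg_cancel s, ?_, ?_⟩, rfl⟩
    · rcases le_or_gt 0 s with hs0 | hs0
      · exact .inl hs0
      · exact .inr <|
          exists_mem_apply_eq_zero_of_eq_add_zsmul M hαadd hℓ₂ a₂ (neg_pos.2 hs0) h_eq
    · rcases le_or_gt 0 (-s) with hs0 | hs0
      · exact .inl hs0
      · exact .inr <|
          exists_mem_apply_eq_zero_of_eq_add_zsmul M hαadd hℓ₁ a₁ (neg_neg_iff_pos.1 hs0) h_eq.symm

end AddSubmonoid

open AddSubmonoid in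
theorem gluing_monoid_bijOn_and_submonoid_general
    {G R : Type*} [AddCommGroup G] [CommRing R]
    (M : AddSubmonoid G)
    (hsharp : ∀ a ∈ M, -a ∈ M → a = 0)
    (hsat : ∀ g : G, ∀ n : ℤ, 1 ≤ n → n • g ∈ M → g ∈ M)
    (α : M → R)
    (hαadd : ∀ a b : M, α (a + b) = α a * α b)
    (ℓ₁ ℓ₂ : M) (hℓ₁ : α ℓ₁ = 0) (hℓ₂ : α ℓ₂ = 0)
    (hne : (ℓ₁ : G) + (ℓ₂ : G) ≠ 0) :
    Set.BijOn (fun q : M × ℤ × M × ℤ => (q.1, q.2.2.1))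
      {q : M × ℤ × M × ℤ |
        (q.1 : G) + q.2.1 • (ℓ₁ : G) = (q.2.2.1 : G) + q.2.2.2 • (ℓ₂ : G) ∧
        q.2.1 + q.2.2.2 = 0 ∧
        (0 ≤ q.2.1 ∨
          ∃ h : (q.1 : G) + q.2.1 • (ℓ₁ : G) ∈ M,
            α ⟨(q.1 : G) + q.2.1 • (ℓ₁ : G), h⟩ = 0) ∧
        (0 ≤ q.2.2.2 ∨
          ∃ h : (q.2.2.1 : G) + q.2.2.2 • (ℓ₂ : G) ∈ M,
            α ⟨(q.2.2.1 : G) + q.2.2.2 • (ℓ₂ : G), h⟩ = 0)}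
      {p : M × M | ∃ s : ℤ, (p.2 : G) - (p.1 : G) = s • ((ℓ₁ : G) + (ℓ₂ : G))} ∧
    ∃ N : AddSubmonoid (M × M),
      (N : Set (M × M)) =
        {p : M × M | ∃ s : ℤ, (p.2 : G) - (p.1 : G) = s • ((ℓ₁ : G) + (ℓ₂ : G))} := by
  rw [← coe_divisibilitySubmonoid]
  exact ⟨bijOn_gluingQuadruples hsharp hsat hαadd hℓ₁ hℓ₂ hne, _, rfl⟩

/-- Let `G` be an abelian group, `M ⊆ G` a sharp and saturated submonoid, `R` a
commutative ring, `α : M → R` a multiplicative map, and `ℓ₁, ℓ₂ ∈ M` with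
`α ℓ₁ = 0`, `α ℓ₂ = 0` and `ℓ₁ + ℓ₂ ≠ 0`.  With `S` and `T` as in Statement 0:
(1) the projection `(a₁, s₁, a₂, s₂) ↦ (a₁, a₂)` is a bijection from `S` onto
`T`; and (2) `T` is a submonoid of `M × M`. -/
theorem gluing_monoid_bijOn_and_submonoid
    {G R : Type*} [AddCommGroup G] [CommRing R]
    (M : AddSubmonoid G)
    (hsharp : ∀ a ∈ M, -a ∈ M → a = 0)
    (hsat : ∀ g : G, ∀ n : ℤ, 1 ≤ n → n • g ∈ M → g ∈ M)
    (α : M → R) (hα0 : α 0 = 1)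
    (hαadd : ∀ a b : M, α (a + b) = α a * α b)
    (ℓ₁ ℓ₂ : M) (hℓ₁ : α ℓ₁ = 0) (hℓ₂ : α ℓ₂ = 0)
    (hne : (ℓ₁ : G) + (ℓ₂ : G) ≠ 0) :
    Set.BijOn (fun q : M × ℤ × M × ℤ => (q.1, q.2.2.1))
      {q : M × ℤ × M × ℤ |
        (q.1 : G) + q.2.1 • (ℓ₁ : G) = (q.2.2.1 : G) + q.2.2.2 • (ℓ₂ : G) ∧
        q.2.1 + q.2.2.2 = 0 ∧
        (0 ≤ q.2.1 ∨
          ∃ h : (q.1 : G) + q.2.1 • (ℓ₁ : G) ∈ M,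
            α ⟨(q.1 : G) + q.2.1 • (ℓ₁ : G), h⟩ = 0) ∧
        (0 ≤ q.2.2.2 ∨
          ∃ h : (q.2.2.1 : G) + q.2.2.2 • (ℓ₂ : G) ∈ M,
            α ⟨(q.2.2.1 : G) + q.2.2.2 • (ℓ₂ : G), h⟩ = 0)}
      {p : M × M | ∃ s : ℤ, (p.2 : G) - (p.1 : G) = s • ((ℓ₁ : G) + (ℓ₂ : G))} ∧
    ∃ N : AddSubmonoid (M × M),
      (N : Set (M × M)) =
        {p : M × M | ∃ s : ℤ, (p.2 : G) - (p.1 : G) = s • ((ℓ₁ : G) + (ℓ₂ : G))} :=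
  gluing_monoid_bijOn_and_submonoid_general M hsharp hsat α hαadd ℓ₁ ℓ₂ hℓ₁ hℓ₂ hne
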